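/- For R a free algebra T(V) with V finite dimensional, there is an isomorphism of R-bimodules DerR := Der(R, R⊗R) ≅ R ⊗ V* ⊗ R, where the bimodule structure on R⊗R used to define the target comes from the inner bimodule action u*(x⊗y)*v = xv ⊗ uy. -/
import Mathlib


open TensorProduct

set_option maxHeartbeats 1000000
set_option synthInstance.maxHeartbeats 400000

namespace Stmt3

variable (k V : Type*) [Field k] [AddCommGroup V] [Module k V]

/-- Double derivations of `R = T(V)`: derivations `R → R ⊗ R` for the outer bimodule
structure on `R ⊗ R`. -/
def IsDoubleDerivation
    (D : TensorAlgebra k V →ₗ[k] TensorAlgebra k V ⊗[k] TensorAlgebra k V) : Prop :=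
  ∀ x y : TensorAlgebra k V,
    D (x * y) = (x ⊗ₜ[k] (1 : TensorAlgebra k V)) * D y + D x * ((1 : TensorAlgebra k V) ⊗ₜ[k] y)

/-- The inner `R`-bimodule action `u * (x ⊗ y) * v = xv ⊗ uy` on `R ⊗ R`, applied to a
double derivation pointwise. -/
noncomputable def innerAct (a b : TensorAlgebra k V) :
    TensorAlgebra k V ⊗[k] TensorAlgebra k V →ₗ[k] TensorAlgebra k V ⊗[k] TensorAlgebra k V :=
  TensorProduct.map (LinearMap.mulRight k b) (LinearMap.mulLeft k a)

/-- The `R`-bimodule action on `R ⊗ V* ⊗ R` : `a · (r ⊗ f ⊗ r') · b = ar ⊗ f ⊗ r'b`. -/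
noncomputable def targetAct (a b : TensorAlgebra k V) :
    TensorAlgebra k V ⊗[k] (Module.Dual k V ⊗[k] TensorAlgebra k V) →ₗ[k]
      TensorAlgebra k V ⊗[k] (Module.Dual k V ⊗[k] TensorAlgebra k V) :=
  TensorProduct.map (LinearMap.mulLeft k a)
    (TensorProduct.map LinearMap.id (LinearMap.mulRight k b))

section Aux

variable {k V}

local notation "R" => TensorAlgebra k V

/-- The generator map `v ↦ [[ι v ⊗ 1, φ v], [0, 1 ⊗ ι v]]`. -/
noncomputable def genMap (φ : V →ₗ[k] R ⊗[k] R) :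
    V →ₗ[k] Matrix (Fin 2) (Fin 2) (R ⊗[k] R) where
  toFun v := Matrix.of
    ![![TensorAlgebra.ι k v ⊗ₜ[k] 1, φ v], ![0, 1 ⊗ₜ[k] TensorAlgebra.ι k v]]
  map_add' u v := by
    ext i j
    fin_cases i <;> fin_cases j <;>
      simp [Matrix.add_apply, TensorProduct.add_tmul, TensorProduct.tmul_add]
  map_smul' c v := by
    ext i j
    fin_cases i <;> fin_cases j <;>
      simp [Matrix.smul_apply, TensorProduct.smul_tmul', TensorProduct.tmul_smul]

noncomputable def gHom (φ : V →ₗ[k] R ⊗[k] R) :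
    R →ₐ[k] Matrix (Fin 2) (Fin 2) (R ⊗[k] R) :=
  TensorAlgebra.lift k (genMap φ)

lemma gHom_entries (φ : V →ₗ[k] R ⊗[k] R) (x : R) :
    gHom φ x 1 0 = 0 ∧ gHom φ x 0 0 = x ⊗ₜ[k] 1 ∧ gHom φ x 1 1 = 1 ⊗ₜ[k] x := by
  induction x using TensorAlgebra.induction with
  | algebraMap r =>
    refine ⟨?_, ?_, ?_⟩ <;>
      simp [AlgHom.commutes, Matrix.algebraMap_matrix_apply,
        Algebra.TensorProduct.algebraMap_apply, Algebra.algebraMap_eq_smul_one,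
        Algebra.TensorProduct.one_def, TensorProduct.smul_tmul', TensorProduct.tmul_smul]
  | ι v =>
    refine ⟨?_, ?_, ?_⟩ <;> simp [gHom, TensorAlgebra.lift_ι_apply, genMap]
  | mul a b ha hb =>
    obtain ⟨ha1, ha2, ha3⟩ := ha
    obtain ⟨hb1, hb2, hb3⟩ := hb
    refine ⟨?_, ?_, ?_⟩ <;>
      simp [map_mul, Matrix.mul_apply, Fin.sum_univ_two, ha1, ha2, ha3, hb1, hb2, hb3,
        Algebra.TensorProduct.tmul_mul_tmul]
  | add a b ha hb =>
    obtain ⟨ha1, ha2, ha3⟩ := ha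
    obtain ⟨hb1, hb2, hb3⟩ := hb
    refine ⟨?_, ?_, ?_⟩ <;>
      simp [map_add, Matrix.add_apply, ha1, ha2, ha3, hb1, hb2, hb3,
        TensorProduct.add_tmul, TensorProduct.tmul_add]

/-- The double derivation with values `φ` on `V`. -/
noncomputable def derOf (φ : V →ₗ[k] R ⊗[k] R) : R →ₗ[k] R ⊗[k] R where
  toFun x := gHom φ x 0 1
  map_add' x y := by simp [map_add, Matrix.add_apply]
  map_smul' c x := by simp [map_smul, Matrix.smul_apply]

lemma derOf_isDD (φ : V →ₗ[k] R ⊗[k] R) : IsDoubleDerivation k V (derOf φ) := by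
  intro x y
  obtain ⟨hx1, hx2, hx3⟩ := gHom_entries φ x
  obtain ⟨hy1, hy2, hy3⟩ := gHom_entries φ y
  show gHom φ (x * y) 0 1 = _
  rw [map_mul, Matrix.mul_apply, Fin.sum_univ_two, hx2, hy3]
  rfl

lemma derOf_ι (φ : V →ₗ[k] R ⊗[k] R) (v : V) :
    derOf φ (TensorAlgebra.ι k v) = φ v := by
  show gHom φ (TensorAlgebra.ι k v) 0 1 = φ v
  simp [gHom, TensorAlgebra.lift_ι_apply, genMap]

lemma dd_one {D : R →ₗ[k] R ⊗[k] R} (hD : IsDoubleDerivation k V D) : D 1 = 0 := by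
  have h := hD 1 1
  rw [one_mul, ← Algebra.TensorProduct.one_def, one_mul, mul_one] at h
  exact (left_eq_add.mp h)

/-- Uniqueness: a double derivation is determined by its values on `V`. -/
lemma dd_ext {D D' : R →ₗ[k] R ⊗[k] R}
    (hD : IsDoubleDerivation k V D) (hD' : IsDoubleDerivation k V D')
    (h : ∀ v, D (TensorAlgebra.ι k v) = D' (TensorAlgebra.ι k v)) : D = D' := by
  ext x
  induction x using TensorAlgebra.induction with
  | algebraMap r =>
    rw [Algebra.algebraMap_eq_smul_one, map_smul, map_smul, dd_one hD, dd_one hD']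
  | ι v => exact h v
  | mul a b ha hb => rw [hD a b, hD' a b, ha, hb]
  | add a b ha hb => rw [map_add, map_add, ha, hb]

lemma dd_add {D D' : R →ₗ[k] R ⊗[k] R}
    (hD : IsDoubleDerivation k V D) (hD' : IsDoubleDerivation k V D') :
    IsDoubleDerivation k V (D + D') := by
  intro x y
  simp only [LinearMap.add_apply, hD x y, hD' x y, mul_add, add_mul]
  abel

lemma dd_smul {D : R →ₗ[k] R ⊗[k] R} (c : k)
    (hD : IsDoubleDerivation k V D) : IsDoubleDerivation k V (c • D) := by
  intro x y
  simp only [LinearMap.smul_apply, hD x y, smul_add, mul_smul_comm, smul_mul_assoc]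

lemma innerAct_left (a b : R) (x : R) (m : R ⊗[k] R) :
    innerAct k V a b ((x ⊗ₜ[k] (1 : R)) * m) = (x ⊗ₜ[k] (1 : R)) * innerAct k V a b m := by
  induction m using TensorProduct.induction_on with
  | zero => simp
  | tmul s t =>
    simp [innerAct, Algebra.TensorProduct.tmul_mul_tmul, mul_assoc]
  | add m n hm hn => simp only [mul_add, map_add, hm, hn]

lemma innerAct_right (a b : R) (y : R) (m : R ⊗[k] R) :
    innerAct k V a b (m * ((1 : R) ⊗ₜ[k] y)) = innerAct k V a b m * ((1 : R) ⊗ₜ[k] y) := by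
  induction m using TensorProduct.induction_on with
  | zero => simp
  | tmul s t =>
    simp [innerAct, Algebra.TensorProduct.tmul_mul_tmul, mul_assoc]
  | add m n hm hn => simp only [add_mul, map_add, hm, hn]

lemma dd_inner {D : R →ₗ[k] R ⊗[k] R} (a b : R)
    (hD : IsDoubleDerivation k V D) :
    IsDoubleDerivation k V ((innerAct k V a b).comp D) := by
  intro x y
  simp only [LinearMap.comp_apply, hD x y, map_add, innerAct_left, innerAct_right]

/-- The linear equivalence `R ⊗ (V* ⊗ R) ≃ (V →ₗ R ⊗ R)` sending
`r ⊗ f ⊗ r'` to `v ↦ f v • (r' ⊗ r)`. -/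
noncomputable def Eiso [FiniteDimensional k V] :
    (R ⊗[k] (Module.Dual k V ⊗[k] R)) ≃ₗ[k] (V →ₗ[k] R ⊗[k] R) :=
  ((TensorProduct.leftComm k R (Module.Dual k V) R).trans
    (TensorProduct.congr (LinearEquiv.refl k _) (TensorProduct.comm k R R))).trans
    (dualTensorHomEquiv k V (R ⊗[k] R))

lemma Eiso_tmul [FiniteDimensional k V] (r r' : R) (f : Module.Dual k V) (v : V) :
    Eiso (r ⊗ₜ[k] (f ⊗ₜ[k] r')) v = f v • (r' ⊗ₜ[k] r) := by
  simp [Eiso, TensorProduct.leftComm_tmul]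

lemma Eiso_target [FiniteDimensional k V] (a b : R)
    (t : R ⊗[k] (Module.Dual k V ⊗[k] R)) :
    Eiso (targetAct k V a b t) = (innerAct k V a b) ∘ₗ (Eiso t) := by
  induction t using TensorProduct.induction_on with
  | zero => simp
  | tmul r s =>
    induction s using TensorProduct.induction_on with
    | zero => simp [TensorProduct.tmul_zero]
    | tmul f r' =>
      ext v
      simp [targetAct, innerAct, Eiso_tmul]
    | add s₁ s₂ h1 h2 =>
      rw [TensorProduct.tmul_add, map_add, map_add, map_add, h1, h2,
        LinearMap.comp_add]
  | add t₁ t₂ h1 h2 =>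
    rw [map_add, map_add, map_add, h1, h2, LinearMap.comp_add]

lemma derOf_add (φ ψ : V →ₗ[k] R ⊗[k] R) : derOf (φ + ψ) = derOf φ + derOf ψ :=
  dd_ext (derOf_isDD _) (dd_add (derOf_isDD _) (derOf_isDD _))
    (fun v => by simp [derOf_ι])

lemma derOf_smul (c : k) (φ : V →ₗ[k] R ⊗[k] R) : derOf (c • φ) = c • derOf φ :=
  dd_ext (derOf_isDD _) (dd_smul c (derOf_isDD _))
    (fun v => by simp [derOf_ι])

lemma derOf_inner (a b : R) (φ : V →ₗ[k] R ⊗[k] R) :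
    derOf ((innerAct k V a b) ∘ₗ φ) = (innerAct k V a b).comp (derOf φ) :=
  dd_ext (derOf_isDD _) (dd_inner a b (derOf_isDD _))
    (fun v => by simp [derOf_ι])

end Aux

/-- For `R = T(V)` with `V` finite dimensional, there is an isomorphism of
`R`-bimodules `Der(R, R ⊗ R) ≅ R ⊗ V* ⊗ R`, where the bimodule structure on the space of
double derivations comes from the inner action `u * (x ⊗ y) * v = xv ⊗ uy` on `R ⊗ R`. -/
theorem stmt3 [FiniteDimensional k V] :
    ∃ e : {D : TensorAlgebra k V →ₗ[k] TensorAlgebra k V ⊗[k] TensorAlgebra k V //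
            IsDoubleDerivation k V D} ≃
          TensorAlgebra k V ⊗[k] (Module.Dual k V ⊗[k] TensorAlgebra k V),
      (∀ t t', (e.symm (t + t')).1 = (e.symm t).1 + (e.symm t').1) ∧
      (∀ (c : k) t, (e.symm (c • t)).1 = c • (e.symm t).1) ∧
      (∀ (a b : TensorAlgebra k V) t,
        (e.symm (targetAct k V a b t)).1 = (innerAct k V a b).comp (e.symm t).1) := by
  classical
  refine ⟨{ toFun := fun D => Eiso.symm (D.1 ∘ₗ TensorAlgebra.ι k)
            invFun := fun t => ⟨derOf (Eiso t), derOf_isDD _⟩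
            left_inv := ?_
            right_inv := ?_ }, ?_, ?_, ?_⟩
  · intro D
    apply Subtype.ext
    dsimp only
    refine dd_ext (derOf_isDD _) D.2 fun v => ?_
    rw [derOf_ι, LinearEquiv.apply_symm_apply]
    rfl
  · intro t
    dsimp only
    have h : derOf (Eiso t) ∘ₗ TensorAlgebra.ι k = Eiso t := by
      ext v; simp [derOf_ι]
    rw [h, LinearEquiv.symm_apply_apply]
  · intro t t'
    show derOf (Eiso (t + t')) = derOf (Eiso t) + derOf (Eiso t')
    rw [map_add, derOf_add]
  · intro c t
    show derOf (Eiso (c • t)) = c • derOf (Eiso t)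
    rw [map_smul, derOf_smul]
  · intro a b t
    show derOf (Eiso (targetAct k V a b t)) = (innerAct k V a b).comp (derOf (Eiso t))
    rw [Eiso_target, derOf_inner]

end Stmt3
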